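/- Let r and k be odd positive integers with r > 1 such that 2^α · k is a Schemmel nontotient number of order r for all nonnegative integers α. If k₁ and k₂ are relatively prime positive integers with k₁k₂ = k, then either 2^α · k₁ is a Schemmel nontotient of order r for all nonnegative α, or 2^α · k₂ is a Schemmel nontotient of order r for all nonnegative α. -/

import Mathlib

/-!
Suppose `S_r(x₁) = 2^α₁ k₁` and `S_r(x₂) = 2^α₂ k₂` with `k₁, k₂` odd and coprime. If `x₁` and `x₂`
are coprime, `S_r(x₁ x₂) = 2^(α₁+α₂) k₁ k₂`. Otherwise they share a prime `p`, necessarily `p > r`,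
and `p - r` divides both values, so it is a power of two. The prime `p` is odd and cannot divide both
`k₁` and `k₂`, so `p` divides one of `x₁, x₂` exactly once; removing it from that one multiplies its
value by a power of two and keeps the odd part. Induction on `x₁ + x₂` then produces some `x` with
`S_r(x) = 2^α k₁ k₂`.
-/

/-- The `r`-th Schemmel totient function: multiplicative, with
`S_r(p^a) = 0` if `p ≤ r` and `S_r(p^a) = p^(a-1) * (p - r)` if `p > r`. -/
def schemmel (r n : ℕ) : ℕ :=
  n.factorization.prod (fun p a => if p ≤ r then 0 else p ^ (a - 1) * (p - r))

lemma schemmel_mul {r m n : ℕ} (hm : m ≠ 0) (hn : n ≠ 0) (h : m.Coprime n) :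
    schemmel r (m * n) = schemmel r m * schemmel r n := by
  unfold schemmel
  rw [Nat.factorization_mul hm hn, Finsupp.prod_add_index_of_disjoint]
  simpa using h.disjoint_primeFactors

lemma schemmel_prime_pow {r p a : ℕ} (hp : p.Prime) (ha : a ≠ 0) :
    schemmel r (p ^ a) = if p ≤ r then 0 else p ^ (a - 1) * (p - r) := by
  unfold schemmel
  rw [hp.factorization_pow, Finsupp.prod, Finsupp.support_single p ha,
    Finset.prod_singleton, Finsupp.single_eq_same]

lemma schemmel_eq_zero_of_dvd {r p x : ℕ} (hp : p.Prime) (hpx : p ∣ x) (hx : x ≠ 0)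
    (hpr : p ≤ r) : schemmel r x = 0 := by
  unfold schemmel
  rw [Finsupp.prod]
  apply Finset.prod_eq_zero (i := p)
  · rw [Nat.support_factorization, Nat.mem_primeFactors]
    exact ⟨hp, hpx, hx⟩
  · simp [hpr]

lemma lt_of_dvd_of_schemmel_ne_zero {r p x : ℕ} (hp : p.Prime) (hpx : p ∣ x) (hx : x ≠ 0)
    (hs : schemmel r x ≠ 0) : r < p := by
  by_contra! hpr
  exact hs (schemmel_eq_zero_of_dvd hp hpx hx hpr)

lemma schemmel_eq_mul_ordCompl {r p x : ℕ} (hp : p.Prime) (hx : x ≠ 0) (hpx : p ∣ x)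
    (hpr : r < p) :
    schemmel r x = p ^ (x.factorization p - 1) * (p - r) * schemmel r (ordCompl[p] x) := by
  have ha : x.factorization p ≠ 0 := (hp.factorization_pos_of_dvd hx hpx).ne'
  conv_lhs => rw [← Nat.ordProj_mul_ordCompl_eq_self x p]
  rw [schemmel_mul (pow_ne_zero _ hp.ne_zero) (Nat.ordCompl_pos p hx).ne'
      ((Nat.coprime_ordCompl hp hx).pow_left _),
    schemmel_prime_pow hp ha, if_neg (by omega)]

lemma sub_dvd_schemmel {r p x : ℕ} (hp : p.Prime) (hx : x ≠ 0) (hpx : p ∣ x) (hpr : r < p) :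
    p - r ∣ schemmel r x := by
  rw [schemmel_eq_mul_ordCompl hp hx hpx hpr]
  exact (dvd_mul_left _ _).mul_right _

lemma dvd_schemmel_of_two_le_factorization {r p x : ℕ} (hp : p.Prime) (hx : x ≠ 0)
    (hpr : r < p) (h : 2 ≤ x.factorization p) : p ∣ schemmel r x := by
  have hpx : p ∣ x := Nat.dvd_of_factorization_pos (by omega)
  rw [schemmel_eq_mul_ordCompl hp hx hpx hpr]
  exact ((dvd_pow_self p (by omega)).mul_right _).mul_right _

lemma Nat.Prime.eq_two_of_dvd_two_pow_mul {q a b k₁ k₂ : ℕ} (hq : q.Prime)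
    (hcop : k₁.Coprime k₂) (h₁ : q ∣ 2 ^ a * k₁) (h₂ : q ∣ 2 ^ b * k₂) : q = 2 := by
  by_contra hq2
  have hodd : q.Coprime 2 := (Nat.coprime_primes hq Nat.prime_two).2 hq2
  exact hq.one_lt.ne' <| Nat.eq_one_of_dvd_coprimes hcop
    ((hodd.pow_right a).dvd_of_dvd_mul_left h₁) ((hodd.pow_right b).dvd_of_dvd_mul_left h₂)

lemma exists_eq_two_pow_of_dvd_two_pow_mul {d a b k₁ k₂ : ℕ} (hd : d ≠ 0)
    (hcop : k₁.Coprime k₂) (h₁ : d ∣ 2 ^ a * k₁) (h₂ : d ∣ 2 ^ b * k₂) : ∃ e, d = 2 ^ e :=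
  ⟨_, Nat.eq_prime_pow_of_unique_prime_dvd hd fun hq hqd =>
    hq.eq_two_of_dvd_two_pow_mul hcop (hqd.trans h₁) (hqd.trans h₂)⟩

lemma eq_two_pow_sub_mul_of_two_pow_mul_eq {e α k m : ℕ} (hk : Odd k)
    (h : 2 ^ e * m = 2 ^ α * k) : m = 2 ^ (α - e) * k := by
  have hdvd : 2 ^ e ∣ 2 ^ α :=
    (Nat.Coprime.pow_left e hk.coprime_two_left).dvd_of_dvd_mul_right ⟨m, h.symm⟩
  have hea : e ≤ α := (Nat.pow_dvd_pow_iff_le_right (by norm_num)).1 hdvd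
  apply Nat.eq_of_mul_eq_mul_left (pow_pos two_pos e)
  rw [h, ← mul_assoc, ← pow_add, Nat.add_sub_cancel' hea]

lemma exists_lt_schemmel_eq_two_pow_mul_of_factorization_eq_one {r p x α e k : ℕ}
    (hp : p.Prime) (hx : x ≠ 0) (hpx : x.factorization p = 1) (hpr : r < p)
    (he : p - r = 2 ^ e) (hk : Odd k) (hs : schemmel r x = 2 ^ α * k) :
    ∃ β m, 0 < m ∧ m < x ∧ schemmel r m = 2 ^ β * k := by
  have hpdvd : p ∣ x := Nat.dvd_of_factorization_pos (by omega)
  refine ⟨α - e, ordCompl[p] x, Nat.ordCompl_pos p hx, ?_, ?_⟩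
  · rw [hpx, pow_one]
    exact Nat.div_lt_self (Nat.pos_of_ne_zero hx) hp.one_lt
  · apply eq_two_pow_sub_mul_of_two_pow_mul_eq hk
    rw [← hs, schemmel_eq_mul_ordCompl hp hx hpdvd hpr, hpx, he]
    ring

lemma exists_lt_of_prime_dvd_of_dvd {r p x₁ x₂ α₁ α₂ k₁ k₂ : ℕ} (hr : 1 < r)
    (hk₁ : Odd k₁) (hk₂ : Odd k₂) (hcop : k₁.Coprime k₂) (hp : p.Prime)
    (hx₁ : x₁ ≠ 0) (hx₂ : x₂ ≠ 0) (hp₁ : p ∣ x₁) (hp₂ : p ∣ x₂)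
    (hs₁ : schemmel r x₁ = 2 ^ α₁ * k₁) (hs₂ : schemmel r x₂ = 2 ^ α₂ * k₂) :
    (∃ β m, 0 < m ∧ m < x₁ ∧ schemmel r m = 2 ^ β * k₁) ∨
      (∃ β m, 0 < m ∧ m < x₂ ∧ schemmel r m = 2 ^ β * k₂) := by
  have hs₁0 : schemmel r x₁ ≠ 0 := by
    rw [hs₁]
    exact mul_ne_zero (by positivity) hk₁.pos.ne'
  have hpr : r < p := lt_of_dvd_of_schemmel_ne_zero hp hp₁ hx₁ hs₁0
  obtain ⟨e, he⟩ : ∃ e, p - r = 2 ^ e :=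
    exists_eq_two_pow_of_dvd_two_pow_mul (by omega) hcop
      (hs₁ ▸ sub_dvd_schemmel hp hx₁ hp₁ hpr) (hs₂ ▸ sub_dvd_schemmel hp hx₂ hp₂ hpr)
  have hv₁ := hp.factorization_pos_of_dvd hx₁ hp₁
  have hv₂ := hp.factorization_pos_of_dvd hx₂ hp₂
  have hv : x₁.factorization p = 1 ∨ x₂.factorization p = 1 := by
    by_contra! hv
    have hp₁' : p ∣ 2 ^ α₁ * k₁ :=
      hs₁ ▸ dvd_schemmel_of_two_le_factorization hp hx₁ hpr (by omega)
    have hp₂' : p ∣ 2 ^ α₂ * k₂ :=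
      hs₂ ▸ dvd_schemmel_of_two_le_factorization hp hx₂ hpr (by omega)
    have := hp.eq_two_of_dvd_two_pow_mul hcop hp₁' hp₂'
    omega
  exact hv.imp
    (exists_lt_schemmel_eq_two_pow_mul_of_factorization_eq_one hp hx₁ · hpr he hk₁ hs₁)
    (exists_lt_schemmel_eq_two_pow_mul_of_factorization_eq_one hp hx₂ · hpr he hk₂ hs₂)

lemma exists_schemmel_eq_two_pow_mul_mul {r x₁ x₂ α₁ α₂ k₁ k₂ : ℕ} (hr : 1 < r)
    (hk₁ : Odd k₁) (hk₂ : Odd k₂) (hcop : k₁.Coprime k₂) (hx₁ : 0 < x₁) (hx₂ : 0 < x₂)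
    (hs₁ : schemmel r x₁ = 2 ^ α₁ * k₁) (hs₂ : schemmel r x₂ = 2 ^ α₂ * k₂) :
    ∃ α x, 0 < x ∧ schemmel r x = 2 ^ α * (k₁ * k₂) := by
  induction hn : x₁ + x₂ using Nat.strong_induction_on generalizing x₁ x₂ α₁ α₂ with
  | _ n ih =>
    by_cases hx : x₁.Coprime x₂
    · refine ⟨α₁ + α₂, x₁ * x₂, Nat.mul_pos hx₁ hx₂, ?_⟩
      rw [schemmel_mul hx₁.ne' hx₂.ne' hx, hs₁, hs₂, pow_add]
      ring
    obtain ⟨p, hp, hp₁, hp₂⟩ := Nat.Prime.not_coprime_iff_dvd.1 hx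
    rcases exists_lt_of_prime_dvd_of_dvd hr hk₁ hk₂ hcop hp hx₁.ne' hx₂.ne' hp₁ hp₂ hs₁ hs₂ with
      ⟨β, m, hm, hmx, hsm⟩ | ⟨β, m, hm, hmx, hsm⟩
    · exact ih (m + x₂) (by omega) hm hx₂ hsm hs₂ rfl
    · exact ih (x₁ + m) (by omega) hx₁ hm hs₁ hsm rfl

theorem nontotient_factor_of_coprime_split_two_general (r k k₁ k₂ : ℕ)
    (hr : 1 < r) (hkodd : Odd k)
    (h : ∀ α : ℕ, ¬ ∃ x : ℕ, 0 < x ∧ schemmel r x = 2 ^ α * k)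
    (hcop : Nat.Coprime k₁ k₂) (hmul : k₁ * k₂ = k) :
    (∀ α : ℕ, ¬ ∃ x : ℕ, 0 < x ∧ schemmel r x = 2 ^ α * k₁) ∨
    (∀ α : ℕ, ¬ ∃ x : ℕ, 0 < x ∧ schemmel r x = 2 ^ α * k₂) := by
  by_contra! hcon
  obtain ⟨⟨α₁, x₁, hx₁, hs₁⟩, ⟨α₂, x₂, hx₂, hs₂⟩⟩ := hcon
  rw [← hmul, Nat.odd_mul] at hkodd
  obtain ⟨α, x, hx, hs⟩ :=
    exists_schemmel_eq_two_pow_mul_mul hr hkodd.1 hkodd.2 hcop hx₁ hx₂ hs₁ hs₂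
  exact h α ⟨x, hx, hmul ▸ hs⟩

theorem nontotient_factor_of_coprime_split_two (r k k₁ k₂ : ℕ) (hrodd : Odd r)
    (hr : 1 < r) (hk : 0 < k) (hkodd : Odd k)
    (h : ∀ α : ℕ, ¬ ∃ x : ℕ, 0 < x ∧ schemmel r x = 2 ^ α * k)
    (hk₁ : 0 < k₁) (hk₂ : 0 < k₂) (hcop : Nat.Coprime k₁ k₂) (hmul : k₁ * k₂ = k) :
    (∀ α : ℕ, ¬ ∃ x : ℕ, 0 < x ∧ schemmel r x = 2 ^ α * k₁) ∨
    (∀ α : ℕ, ¬ ∃ x : ℕ, 0 < x ∧ schemmel r x = 2 ^ α * k₂) :=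
  nontotient_factor_of_coprime_split_two_general r k k₁ k₂ hr hkodd h hcop hmul
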